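/- Let m ≥ 2 and let G = ℝ/mℤ with its Haar probability measure. Let (R_{ij})_{i≠j, i,j∈{1,…,m}} be independent random variables each distributed according to the Haar (uniform) measure on G, and for inputs x = (x_1,…,x_m) ∈ G^m define S_i(x) = x_i + Σ_{j≠i} R_{ji} − Σ_{j≠i} R_{ij} ∈ G. Then for any two input vectors x, x' ∈ G^m with x_1 + ⋯ + x_m = x'_1 + ⋯ + x'_m in G, the random vectors (S_1(x),…,S_m(x)) and (S_1(x'),…,S_m(x')) have the same distribution. In particular, the joint law of the publicly revealed values (S_1,…,S_m) depends on the private inputs only through their sum modulo m. -/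

import Mathlib

/-!
The revealed vector is `x + D R`, where `D` sends a flow on the complete digraph on the parties
to its net inflow at each vertex. `D` is additive and every zero-sum vector is a net inflow, so
`x' - x = D t` for some flow `t`. Independence with Haar marginals makes the law of `R` the Haar
measure on the group of flows, which is invariant under `R ↦ t + R`; this translation turns
`x + D R` into `x' + D R`.
-/

open MeasureTheory ProbabilityTheory

section Translation

variable {H K : Type*} [AddGroup H] [MeasurableSpace H] [MeasurableAdd H]
  [AddCommGroup K] [MeasurableSpace K] [MeasurableAdd K]

theorem map_add_addMonoidHom_eq_of_sub_mem_range (ν : Measure H) [ν.IsAddLeftInvariant]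
    (D : H →+ K) (hD : Measurable D) {x x' : K} (h : x' - x ∈ D.range) :
    ν.map (fun r => x + D r) = ν.map (fun r => x' + D r) := by
  obtain ⟨t, ht⟩ := h
  calc ν.map (fun r => x + D r)
      = (ν.map (t + ·)).map (fun r => x + D r) := by rw [map_add_left_eq_self]
    _ = ν.map (fun r => x' + D r) := by
      rw [Measure.map_map (hD.const_add x) (measurable_const_add t)]
      congr 1
      funext r
      simp [ht, ← add_assoc]

end Translation

namespace CompleteDigraph

variable {α G : Type*} [Fintype α] [DecidableEq α] [AddCommGroup G]

def netFlow : ({p : α × α // p.1 ≠ p.2} → G) →+ (α → G) where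
  toFun r i := (∑ j ∈ Finset.univ.erase i, if h : j ≠ i then r ⟨(j, i), h⟩ else 0) -
    ∑ j ∈ Finset.univ.erase i, if h : i ≠ j then r ⟨(i, j), h⟩ else 0
  map_zero' := by ext; simp
  map_add' r s := by
    funext i
    simp only [Pi.add_apply]
    rw [sub_add_sub_comm, ← Finset.sum_add_distrib, ← Finset.sum_add_distrib]
    congr 1 <;> exact Finset.sum_congr rfl fun j _ => by split_ifs <;> simp

theorem netFlow_apply (r : {p : α × α // p.1 ≠ p.2} → G) (i : α) :
    netFlow r i = (∑ j ∈ Finset.univ.erase i, if h : j ≠ i then r ⟨(j, i), h⟩ else 0) -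
      ∑ j ∈ Finset.univ.erase i, if h : i ≠ j then r ⟨(i, j), h⟩ else 0 := rfl

theorem netFlow_restrict_apply (f : α → α → G) (i : α) :
    netFlow (fun p : {p : α × α // p.1 ≠ p.2} => f p.1.1 p.1.2) i =
      (∑ j ∈ Finset.univ.erase i, f j i) - ∑ j ∈ Finset.univ.erase i, f i j := by
  rw [netFlow_apply]
  congr 1 <;> refine Finset.sum_congr rfl fun j hj => ?_
  · rw [dif_pos (Finset.ne_of_mem_erase hj)]
  · rw [dif_pos (Finset.ne_of_mem_erase hj).symm]

theorem measurable_netFlow [MeasurableSpace G] [MeasurableAdd₂ G] [MeasurableSub₂ G] :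
    Measurable (netFlow : ({p : α × α // p.1 ≠ p.2} → G) → α → G) := by
  refine measurable_pi_lambda _ fun i => ?_
  simp only [netFlow_apply]
  refine .sub (Finset.measurable_sum _ fun j _ => ?_) (Finset.measurable_sum _ fun j _ => ?_) <;>
    split_ifs <;> fun_prop

theorem mem_range_netFlow_of_sum_eq_zero {y : α → G} (hy : ∑ i, y i = 0) :
    y ∈ (netFlow : ({p : α × α // p.1 ≠ p.2} → G) →+ α → G).range := by
  cases isEmpty_or_nonempty α
  · exact Subsingleton.elim 0 y ▸ zero_mem _
  obtain ⟨a⟩ := ‹Nonempty α›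
  -- send `y i` along the edge `a → i`; the outflow `∑_{i ≠ a} y i` from `a` is `-y a`
  refine ⟨fun p => if p.1.1 = a then y p.1.2 else 0, funext fun i => ?_⟩
  rw [netFlow_restrict_apply (fun j k => if j = a then y k else 0)]
  by_cases hi : i = a
  · subst hi
    simp [Finset.sum_erase_eq_sub, hy]
  · simp [hi, Ne.symm hi]

end CompleteDigraph

open CompleteDigraph

theorem secure_sum_output_law_general (m : ℕ) [Fact ((0 : ℝ) < (m : ℝ))]
    {Ω : Type*} [MeasurableSpace Ω] (μ : Measure Ω) [IsProbabilityMeasure μ]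
    (R : {p : Fin m × Fin m // p.1 ≠ p.2} → Ω → AddCircle (m : ℝ))
    (hindep : iIndepFun R μ)
    (hunif : ∀ p, Measure.map (R p) μ = AddCircle.haarAddCircle)
    (S : (Fin m → AddCircle (m : ℝ)) → Ω → Fin m → AddCircle (m : ℝ))
    (hS : ∀ x ω i, S x ω i = x i +
      (∑ j ∈ Finset.univ.erase i, (if h : j ≠ i then R ⟨(j, i), h⟩ ω else 0)) -
      ∑ j ∈ Finset.univ.erase i, (if h : i ≠ j then R ⟨(i, j), h⟩ ω else 0))
    (x x' : Fin m → AddCircle (m : ℝ)) (hxx' : ∑ i, x i = ∑ i, x' i) :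
    Measure.map (S x) μ = Measure.map (S x') μ := by
  have hR : ∀ p, AEMeasurable (R p) μ := fun p =>
    .of_map_ne_zero (hunif p ▸ IsProbabilityMeasure.ne_zero _)
  have hR_joint : AEMeasurable (fun ω p => R p ω) μ := aemeasurable_pi_lambda _ hR
  have hlaw : μ.map (fun ω p => R p ω) = Measure.pi fun _ => AddCircle.haarAddCircle := by
    simp only [hindep.map_fun_eq_pi_map hR, hunif]
  have hS_comp : ∀ y, S y = (fun r => y + netFlow r) ∘ fun ω p => R p ω := fun y => by
    funext ω i
    simp [hS, netFlow_apply, add_sub_assoc]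
  have hdiff : x' - x ∈ (netFlow : ({p : Fin m × Fin m // p.1 ≠ p.2} → _) →+ _).range :=
    mem_range_netFlow_of_sum_eq_zero (by simp [Finset.sum_sub_distrib, hxx'])
  rw [hS_comp x, hS_comp x',
    ← AEMeasurable.map_map_of_aemeasurable (measurable_netFlow.const_add x).aemeasurable hR_joint,
    ← AEMeasurable.map_map_of_aemeasurable (measurable_netFlow.const_add x').aemeasurable hR_joint,
    hlaw]
  exact map_add_addMonoidHom_eq_of_sub_mem_range _ _ measurable_netFlow hdiff

/-- **The revealed values of the Secure-Sum protocol depend only on the sum of the inputs.**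
Let `m ≥ 2`, `G = ℝ/mℤ` with its Haar probability measure, and let `(R i j)` (for ordered
pairs `i ≠ j` of parties in `{1, …, m}`) be independent random variables, each Haar-uniform
on `G`.  For inputs `x ∈ G^m`, party `i` reveals `S_i(x) = x i + ∑_{j≠i} R j i - ∑_{j≠i} R i j`.
Then for any inputs `x, x'` with the same sum, `(S_1(x), …, S_m(x))` and
`(S_1(x'), …, S_m(x'))` have the same distribution. -/
theorem secure_sum_output_law (m : ℕ) (hm : 2 ≤ m) [Fact ((0 : ℝ) < (m : ℝ))]
    {Ω : Type*} [MeasurableSpace Ω] (μ : Measure Ω) [IsProbabilityMeasure μ]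
    (R : {p : Fin m × Fin m // p.1 ≠ p.2} → Ω → AddCircle (m : ℝ))
    (hmeas : ∀ p, Measurable (R p))
    (hindep : iIndepFun R μ)
    (hunif : ∀ p, Measure.map (R p) μ = AddCircle.haarAddCircle)
    (S : (Fin m → AddCircle (m : ℝ)) → Ω → Fin m → AddCircle (m : ℝ))
    (hS : ∀ x ω i, S x ω i = x i +
      (∑ j ∈ Finset.univ.erase i, (if h : j ≠ i then R ⟨(j, i), h⟩ ω else 0)) -
      ∑ j ∈ Finset.univ.erase i, (if h : i ≠ j then R ⟨(i, j), h⟩ ω else 0))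
    (x x' : Fin m → AddCircle (m : ℝ)) (hxx' : ∑ i, x i = ∑ i, x' i) :
    Measure.map (S x) μ = Measure.map (S x') μ :=
  secure_sum_output_law_general m μ R hindep hunif S hS x x' hxx'
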